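/- Uniqueness of local translations modulo bisimulation: let Λ be a logic on a language of cyclic formulas that contains all propositional tautologies and the axioms □(φ→ψ)→(□φ→□ψ), is closed under modus ponens and necessitation, and is closed under Löb's Rule. Suppose 𝒯 is a local translation of the formula φ into Λ, 𝒯' is a local translation of the formula φ' into Λ, and R is a bisimulation between φ and φ' (not necessarily root-preserving). Then whenever a R a', Λ ⊢ 𝒯(a) ↔ 𝒯'(a'). -/

import Mathlib

/-!
Cyclic syntax for Cyclic Henkin Logic (Visser, "Cyclic Henkin Logic").

A graph is a directed pointed labeled graph with ordered successors;
formulas of the cyclic modal language `𝕃°` are such graphs over the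
modal labels, whose box-occurrences guard all cycles.
-/


theorem finite_option {α : Type} (h : Finite α) : Finite (Option α) := by
  haveI := h
  haveI : Fintype α := Fintype.ofFinite _
  exact Finite.of_fintype _

/-- Directed pointed labeled graphs with ordered successors over a label
set `L` with arity function `ar`.  The vertex set is finite. -/
structure RGraph (L : Type) (ar : L → ℕ) : Type 1 where
  V : Type
  fin : Finite V
  root : V
  label : V → L
  succ : (a : V) → Fin (ar (label a)) → V

namespace RGraph

variable {L : Type} {ar : L → ℕ}

/-- The edge relation `a Ŝ b`. -/
def Edge (G : RGraph L ar) (a b : G.V) : Prop := ∃ i, G.succ a i = b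

/-- Every vertex is reachable from the root by a finite path. -/
def Reachable (G : RGraph L ar) : Prop :=
  ∀ a, Relation.ReflTransGen G.Edge G.root a

/-- `C` is a cycle: its elements can be arranged in a closed path of
pairwise distinct vertices. -/
def IsCycle (G : RGraph L ar) (C : Set G.V) : Prop :=
  ∃ (k : ℕ) (f : Fin (k + 1) → G.V), Function.Injective f ∧ Set.range f = C ∧
    (∀ i : Fin k, G.Edge (f i.castSucc) (f i.succ)) ∧ G.Edge (f (Fin.last k)) (f 0)

/-- A guard: a set of vertices meeting every cycle. -/
def IsGuard (G : RGraph L ar) (W : Set G.V) : Prop :=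
  ∀ C, G.IsCycle C → (C ∩ W).Nonempty

/-- The number of cycles `c(G)`. -/
noncomputable def numCycles (G : RGraph L ar) : ℕ :=
  Set.ncard {C : Set G.V | G.IsCycle C}

/-- A vertex on a cycle. -/
def OnCycle (G : RGraph L ar) (a : G.V) : Prop := ∃ C, G.IsCycle C ∧ a ∈ C

/-- The root is a cycle vertex. -/
def RootOnCycle (G : RGraph L ar) : Prop := G.OnCycle G.root

/-- Acyclic graphs. -/
def Acyclic (G : RGraph L ar) : Prop := ∀ C, ¬ G.IsCycle C

/-- Bisimulations between graphs. -/
def IsBisim (G G' : RGraph L ar) (R : G.V → G'.V → Prop) : Prop :=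
  ∀ a a', R a a' → ∃ h : G.label a = G'.label a',
    ∀ i : Fin (ar (G.label a)),
      R (G.succ a i) (G'.succ a' (Fin.cast (congrArg ar h) i))

/-- Bisimilarity `G ≃ G'`: some bisimulation relates the roots. -/
def Bisim (G G' : RGraph L ar) : Prop :=
  ∃ R, G.IsBisim G' R ∧ R G.root G'.root

/-- Isomorphism `G ≅ G'`: a bijective bisimulation relating the roots. -/
def Iso (G G' : RGraph L ar) : Prop :=
  ∃ e : G.V ≃ G'.V, G.IsBisim G' (fun a b => e a = b) ∧ e G.root = G'.root

end RGraph

/-- Labels for the cyclic modal language `𝕃°`. -/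
inductive FLab : Type
  | top | bot | var (n : ℕ) | neg | box | and | or | imp
deriving DecidableEq

/-- Arities of the labels. -/
@[reducible] def FLab.ar : FLab → ℕ
  | .top => 0 | .bot => 0 | .var _ => 0
  | .neg => 1 | .box => 1
  | .and => 2 | .or => 2 | .imp => 2

/-- Raw formulas of `𝕃°`: graphs over the modal labels. -/
abbrev Fm := RGraph FLab FLab.ar

namespace Fm

/-- `p` occurs in `φ`. -/
def Occurs (φ : Fm) (p : ℕ) : Prop := ∃ a, φ.label a = .var p

/-- The set `bo(φ)` of box-occurrences. -/
def boOcc (φ : Fm) : Set φ.V := {a | φ.label a = .box}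

/-- The guard condition: every cycle contains a box-occurrence. -/
def Guarded (φ : Fm) : Prop := φ.IsGuard φ.boOcc

/-- `φ` is a formula: a (rooted, reachable) graph whose box-occurrences
form a guard. -/
def WF (φ : Fm) : Prop := φ.Reachable ∧ φ.Guarded

/-- An edge leaving a non-box vertex. -/
def EdgeNB (φ : Fm) (a b : φ.V) : Prop := φ.Edge a b ∧ φ.label a ≠ .box

/-- `φ` is modalised in `p`: every path from the root to a `p`-occurrence
passes through a box-occurrence. -/
def Modalised (φ : Fm) (p : ℕ) : Prop :=
  ∀ a, Relation.ReflTransGen φ.EdgeNB φ.root a → φ.label a ≠ .var p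

theorem Modalised.root_ne {φ : Fm} {p : ℕ} (h : φ.Modalised p) :
    φ.label φ.root ≠ .var p :=
  h φ.root Relation.ReflTransGen.refl

/-! ### Operations on formulas -/

/-- One-point graph with a 0-ary label. -/
def ofLab0 (l : FLab) : Fm where
  V := PUnit
  fin := inferInstance
  root := .unit
  label := fun _ => l
  succ := fun _ _ => .unit

def topFm : Fm := ofLab0 .top
def botFm : Fm := ofLab0 .bot
def varFm (n : ℕ) : Fm := ofLab0 (.var n)

def lab1 (l : FLab) (φ : Fm) : Option φ.V → FLab
  | none => l
  | some a => φ.label a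

/-- Add a fresh root with 1-ary label `l` above `φ`. -/
def ofLab1 (l : FLab) (φ : Fm) : Fm where
  V := Option φ.V
  fin := finite_option φ.fin
  root := none
  label := lab1 l φ
  succ := fun a => match a with
    | none => fun _ => some φ.root
    | some b => fun i => some (φ.succ b i)

def neg (φ : Fm) : Fm := ofLab1 .neg φ
def box (φ : Fm) : Fm := ofLab1 .box φ

def lab2 (l : FLab) (φ ψ : Fm) : Option (φ.V ⊕ ψ.V) → FLab
  | none => l
  | some (.inl a) => φ.label a
  | some (.inr b) => ψ.label b

/-- Add a fresh root with 2-ary label `l` above the disjoint sum of `φ`, `ψ`. -/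
def ofLab2 (l : FLab) (φ ψ : Fm) : Fm where
  V := Option (φ.V ⊕ ψ.V)
  fin := finite_option (by haveI := φ.fin; haveI := ψ.fin; exact inferInstance)
  root := none
  label := lab2 l φ ψ
  succ := fun a => match a with
    | none => fun i => if (i : ℕ) = 0 then some (.inl φ.root) else some (.inr ψ.root)
    | some (.inl a) => fun i => some (.inl (φ.succ a i))
    | some (.inr b) => fun i => some (.inr (ψ.succ b i))

def and (φ ψ : Fm) : Fm := ofLab2 .and φ ψ
def or (φ ψ : Fm) : Fm := ofLab2 .or φ ψ
def imp (φ ψ : Fm) : Fm := ofLab2 .imp φ ψ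

/-- `φ ↔ ψ` as `(φ→ψ) ∧ (ψ→φ)`. -/
def iff (φ ψ : Fm) : Fm := Fm.and (Fm.imp φ ψ) (Fm.imp ψ φ)

/-- The fixed point `Ϝp.φ`: identify the root with all `p`-occurrences,
keeping the label of the root.  (The root is not a `p`-occurrence, e.g.
because `φ` is modalised in `p`.) -/
def fix (φ : Fm) (p : ℕ) (h : φ.label φ.root ≠ .var p) : Fm where
  V := {a : φ.V // φ.label a ≠ .var p}
  fin := by haveI := φ.fin; exact inferInstance
  root := ⟨φ.root, h⟩
  label := fun a => φ.label a.1
  succ := fun a i =>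
    if hb : φ.label (φ.succ a.1 i) = .var p then ⟨φ.root, h⟩
    else ⟨φ.succ a.1 i, hb⟩

/-! ### Substitution -/

def varIdx : FLab → Option ℕ
  | .var q => some q
  | _ => none

/-- The copy of `σ q` hanging at a `q`-occurrence. -/
def copyT (σ : ℕ → Fm) : Option ℕ → Type
  | some q => (σ q).V
  | none => PUnit

theorem copyT_finite (σ : ℕ → Fm) : ∀ o, Finite (copyT σ o)
  | some q => (σ q).fin
  | none => show Finite PUnit from inferInstance

def copyRoot (σ : ℕ → Fm) : ∀ o, copyT σ o
  | some q => (σ q).root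
  | none => .unit

def copyLabel (σ : ℕ → Fm) (d : FLab) : ∀ o, copyT σ o → FLab
  | some q, b => (σ q).label b
  | none, _ => d

/-- Vertices of the substitution `φσ`. -/
def SubV (φ : Fm) (σ : ℕ → Fm) : Type :=
  Σ a : φ.V, copyT σ (varIdx (φ.label a))

def substSucc (φ : Fm) (σ : ℕ → Fm) (a : φ.V) :
    ∀ (o : Option ℕ), o = varIdx (φ.label a) → ∀ b : copyT σ o,
      Fin (copyLabel σ (φ.label a) o b).ar → SubV φ σ
  | some q, h, b, i => ⟨a, cast (congrArg (copyT σ) h) ((σ q).succ b i)⟩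
  | none, _, _, i => ⟨φ.succ a i, copyRoot σ _⟩

/-- Simultaneous substitution: every `q`-occurrence of `φ` is identified
with the root of a disjoint copy of `σ q`, keeping the label of the root
of `σ q`. -/
def subst (φ : Fm) (σ : ℕ → Fm) : Fm where
  V := SubV φ σ
  fin := by
    haveI := φ.fin
    haveI : ∀ a : φ.V, Finite (copyT σ (varIdx (φ.label a))) :=
      fun a => copyT_finite σ _
    exact (inferInstance : Finite (Σ a : φ.V, copyT σ (varIdx (φ.label a))))
  root := ⟨φ.root, copyRoot σ _⟩
  label := fun x => copyLabel σ (φ.label x.1) _ x.2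
  succ := fun x => substSucc φ σ x.1 _ rfl x.2

/-- Substitution of a single variable, `φ[p:ψ]`. -/
def subst1 (φ : Fm) (p : ℕ) (ψ : Fm) : Fm :=
  φ.subst (fun q => if q = p then ψ else varFm q)

/-! ### Snip -/

-- Redirect all incoming edges of the root to a new leaf labeled `p`.
open Classical in
noncomputable def snipC (φ : Fm) (p : ℕ) : Fm where
  V := Option φ.V
  fin := finite_option φ.fin
  root := some φ.root
  label := lab1 (.var p) φ
  succ := fun a => match a with
    | none => Fin.elim0
    | some a => fun i =>
        if φ.succ a i = φ.root then none else some (φ.succ a i)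

-- `snip(φ,p)`: if the root is on a cycle, redirect all incoming edges
-- of the root to a new leaf labeled `p`; otherwise `φ` itself.
open Classical in
noncomputable def snip (φ : Fm) (p : ℕ) : Fm :=
  if φ.RootOnCycle then φ.snipC p else φ

/-- `snip(φ,ψ) := snip(φ,p)[p:ψ]` (for a variable `p` not occurring in `φ`). -/
noncomputable def snipF (φ : Fm) (p : ℕ) (ψ : Fm) : Fm :=
  (φ.snip p).subst1 p ψ

theorem snip_root_ne {φ : Fm} {p : ℕ} (h : φ.RootOnCycle) (hp : ¬ φ.Occurs p) :
    (φ.snip p).label (φ.snip p).root ≠ .var p := by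
  rw [snip, if_pos h]
  exact fun hc => hp ⟨φ.root, hc⟩

/-! ### The transitive closure modality `□•φ := Ϝp.□(φ∧p)` -/

def bslab (φ : Fm) : Option (Option φ.V) → FLab
  | none => .box
  | some none => .and
  | some (some a) => φ.label a

/-- `□•φ := Ϝp.□(φ∧p)`, for `p` not occurring in `φ`: a box-root whose
`∧`-successor returns to the box-root. -/
def boxStar (φ : Fm) : Fm where
  V := Option (Option φ.V)
  fin := finite_option (finite_option φ.fin)
  root := none
  label := bslab φ
  succ := fun a => match a with
    | none => fun _ => some none
    | some none => fun i => if (i : ℕ) = 0 then some (some φ.root) else none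
    | some (some a) => fun i => some (some (φ.succ a i))

/-- `⊡•φ := φ ∧ □•φ`. -/
def boxDotStar (φ : Fm) : Fm := Fm.and φ (boxStar φ)

/-- Finite conjunctions. -/
def bigAnd : List Fm → Fm
  | [] => topFm
  | φ :: l => Fm.and φ (bigAnd l)

/-- Apply a label, as a connective, to arguments. -/
def applyLab : (l : FLab) → (Fin l.ar → Fm) → Fm
  | .top, _ => topFm
  | .bot, _ => botFm
  | .var n, _ => varFm n
  | .neg, f => neg (f 0)
  | .box, f => box (f 0)
  | .and, f => Fm.and (f 0) (f 1)
  | .or, f => Fm.or (f 0) (f 1)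
  | .imp, f => Fm.imp (f 0) (f 1)

/-- First successor (defaulting to `a` itself at leaves). -/
def succ0 (φ : Fm) (a : φ.V) : φ.V :=
  if h : 0 < (φ.label a).ar then φ.succ a ⟨0, h⟩ else a

/-- The subgraph of `φ` generated by `a`. -/
def restrict (φ : Fm) (a : φ.V) : Fm where
  V := {b : φ.V // Relation.ReflTransGen φ.Edge a b}
  fin := by haveI := φ.fin; exact inferInstance
  root := ⟨a, Relation.ReflTransGen.refl⟩
  label := fun b => φ.label b.1
  succ := fun b i => ⟨φ.succ b.1 i, b.2.tail ⟨i, rfl⟩⟩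

/-- A variable not occurring in `φ`. -/
noncomputable def freshVar (φ : Fm) : ℕ := by
  classical
  haveI := φ.fin
  haveI : Fintype φ.V := Fintype.ofFinite _
  exact Finset.univ.sup fun a => match φ.label a with | .var q => q + 1 | _ => 0

/-- `snip(φ,⊤)`. -/
noncomputable def snipTop (φ : Fm) : Fm := φ.snipF φ.freshVar topFm

/-- The list of box-occurrences of `φ`. -/
noncomputable def boxOccList (φ : Fm) : List φ.V := by
  classical
  haveI := φ.fin
  haveI : Fintype φ.V := Fintype.ofFinite _
  exact (Finset.univ.filter fun a => φ.label a = FLab.box).toList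

end Fm

/-! ### Propositional tautologies (as parse trees) -/

inductive PForm : Type
  | var (n : ℕ) | top | bot
  | neg (A : PForm) | and (A B : PForm) | or (A B : PForm) | imp (A B : PForm)

def PForm.eval (v : ℕ → Bool) : PForm → Bool
  | .var n => v n
  | .top => true
  | .bot => false
  | .neg A => !A.eval v
  | .and A B => A.eval v && B.eval v
  | .or A B => A.eval v || B.eval v
  | .imp A B => !A.eval v || B.eval v

/-- Propositional tautology. -/
def PForm.Taut (A : PForm) : Prop := ∀ v, A.eval v = true

/-- Substitution instance of a parse tree by formulas of `𝕃°`. -/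
def PForm.substFm (σ : ℕ → Fm) : PForm → Fm
  | .var n => σ n
  | .top => Fm.topFm
  | .bot => Fm.botFm
  | .neg A => Fm.neg (A.substFm σ)
  | .and A B => Fm.and (A.substFm σ) (B.substFm σ)
  | .or A B => Fm.or (A.substFm σ) (B.substFm σ)
  | .imp A B => Fm.imp (A.substFm σ) (B.substFm σ)

/-! ### Cyclic Henkin Logic -/

/-- Cyclic Henkin Logic `CHL`: modus ponens, necessitation, substitution
instances of propositional tautologies, distribution, bisimilarity, and
Löb's Rule. -/
inductive CHL : Fm → Prop
  | mp {φ ψ : Fm} : CHL (Fm.imp φ ψ) → CHL φ → CHL ψ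
  | nec {φ : Fm} : CHL φ → CHL (Fm.box φ)
  | taut {A : PForm} (σ : ℕ → Fm) : A.Taut → CHL (A.substFm σ)
  | k (φ ψ : Fm) : CHL (Fm.imp (Fm.box (Fm.imp φ ψ)) (Fm.imp (Fm.box φ) (Fm.box ψ)))
  | bisim {φ ψ : Fm} : RGraph.Bisim φ ψ → CHL (Fm.iff φ ψ)
  | lob {φ : Fm} : CHL (Fm.imp (Fm.box φ) φ) → CHL φ

/-- `GL°`: `CHL` plus the axiom scheme `□φ → □□φ`. -/
inductive GLo : Fm → Prop
  | mp {φ ψ : Fm} : GLo (Fm.imp φ ψ) → GLo φ → GLo ψ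
  | nec {φ : Fm} : GLo φ → GLo (Fm.box φ)
  | taut {A : PForm} (σ : ℕ → Fm) : A.Taut → GLo (A.substFm σ)
  | k (φ ψ : Fm) : GLo (Fm.imp (Fm.box (Fm.imp φ ψ)) (Fm.imp (Fm.box φ) (Fm.box ψ)))
  | bisim {φ ψ : Fm} : RGraph.Bisim φ ψ → GLo (Fm.iff φ ψ)
  | lob {φ : Fm} : GLo (Fm.imp (Fm.box φ) φ) → GLo φ
  | four (φ : Fm) : GLo (Fm.imp (Fm.box φ) (Fm.box (Fm.box φ)))

/-- Löb's Logic `GL` on the acyclic formulas. -/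
inductive GLlogic : Fm → Prop
  | mp {φ ψ : Fm} : GLlogic (Fm.imp φ ψ) → GLlogic φ → GLlogic ψ
  | nec {φ : Fm} : GLlogic φ → GLlogic (Fm.box φ)
  | taut {A : PForm} (σ : ℕ → Fm) : (∀ q, (σ q).Acyclic) → A.Taut → GLlogic (A.substFm σ)
  | k (φ ψ : Fm) : φ.Acyclic → ψ.Acyclic →
      GLlogic (Fm.imp (Fm.box (Fm.imp φ ψ)) (Fm.imp (Fm.box φ) (Fm.box ψ)))
  | bisim {φ ψ : Fm} : φ.Acyclic → ψ.Acyclic → RGraph.Bisim φ ψ → GLlogic (Fm.iff φ ψ)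
  | lob {φ : Fm} : φ.Acyclic → GLlogic (Fm.imp (Fm.box φ) φ) → GLlogic φ
  | four (φ : Fm) : φ.Acyclic → GLlogic (Fm.imp (Fm.box φ) (Fm.box (Fm.box φ)))

/-! ### Systems of equations -/

/-- The system `ℰ` (given by `E` on the finite variable set `Q`) is
modalised: its dependency graph is acyclic. -/
def SysModalised (Q : Finset ℕ) (E : ℕ → Fm) : Prop :=
  ∀ q ∈ Q, ¬ Relation.TransGen
      (fun x y => x ∈ Q ∧ y ∈ Q ∧ ¬ (E x).Modalised y) q q

/-- The substitution determined by a solution candidate `F` on `Q`. -/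
def sysSubst (Q : Finset ℕ) (F : ℕ → Fm) : ℕ → Fm :=
  fun q => if q ∈ Q then F q else Fm.varFm q

/-- `F` solves the system `E` on `Q`. -/
def IsSolution (Q : Finset ℕ) (E : ℕ → Fm) (F : ℕ → Fm) : Prop :=
  (∀ q ∈ Q, (F q).WF) ∧
  (∀ q ∈ Q, ∀ q' ∈ Q, ¬ (F q).Occurs q') ∧
  (∀ q ∈ Q, RGraph.Bisim (F q) ((E q).subst (sysSubst Q F)))

/-! ### Local translations -/

/-- A local translation of the formula `φ` into the logic `Λ`. -/
def IsLocalTranslation (Λ : Fm → Prop) (φ : Fm) (T : φ.V → Fm) : Prop :=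
  ∀ a : φ.V, Λ (Fm.iff (T a) (Fm.applyLab (φ.label a) (fun i => T (φ.succ a i))))

-- Substitution determined by a finite assignment.
open Classical in
noncomputable def substOf {ι : Type} (s : ι → ℕ) (ψ : ι → Fm) : ℕ → Fm :=
  fun q => if h : ∃ i, s i = q then ψ h.choose else Fm.varFm q

/-- The characterising equations of the de Jongh–Sambin map `js*`,
defined by course-of-values recursion on the number of cycles and guard
recursion on the box-occurrences on a cycle. -/
def IsJsStar (jsS : (φ : Fm) → φ.V → Fm) : Prop :=
  (∀ (φ : Fm) (a : φ.V), ¬ (φ.label a = .box ∧ φ.OnCycle a) →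
      jsS φ a = Fm.applyLab (φ.label a) (fun i => jsS φ (φ.succ a i))) ∧
  (∀ (φ : Fm) (a : φ.V), φ.label a = .box → φ.OnCycle a →
      jsS φ a = jsS (Fm.snipTop (φ.restrict a)) (Fm.snipTop (φ.restrict a)).root) ∧
  (∀ (φ : Fm) (a : φ.V), (jsS φ a).Acyclic)


/-! ### Auxiliary lemmas for `local_translation_unique` -/

namespace UT

open Relation

lemma transGen_walk {α : Type} {e : α → α → Prop} {a b : α} (h : TransGen e a b) :
    ∃ n : ℕ, 1 ≤ n ∧ ∃ f : Fin (n + 1) → α, f 0 = a ∧ f (Fin.last n) = b ∧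
      ∀ i : Fin n, e (f i.castSucc) (f i.succ) := by
  induction h with
  | @single b hab =>
      refine ⟨1, le_refl _, ![a, b], rfl, rfl, fun i => ?_⟩
      fin_cases i
      simpa using hab
  | @tail b c _ hbc ih =>
      obtain ⟨n, hn, f, hf0, hfl, hedge⟩ := ih
      refine ⟨n + 1, by omega, Fin.snoc f c, ?_, ?_, ?_⟩
      · rw [show (0 : Fin (n + 2)) = Fin.castSucc 0 from rfl, Fin.snoc_castSucc, hf0]
      · rw [Fin.snoc_last]
      · intro i
        rw [Fin.snoc_castSucc]
        by_cases hi : i.val < n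
        · have h1 : i.succ = Fin.castSucc ⟨i.val + 1, by omega⟩ := Fin.ext (by simp)
          rw [h1, Fin.snoc_castSucc]
          have h2 := hedge ⟨i.val, hi⟩
          have h3 : Fin.castSucc (⟨i.val, hi⟩ : Fin n) = i := Fin.ext rfl
          rwa [h3] at h2
        · have hi' : i = Fin.last n := Fin.ext (by simp only [Fin.val_last]; omega)
          have h1 : i.succ = Fin.last (n + 1) := by rw [hi']; exact Fin.ext (by simp)
          rw [h1, Fin.snoc_last, hi', hfl]
          exact hbc

lemma walk_cycle (G : Fm) :
    ∀ k, ∀ f : Fin (k + 1) → G.V,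
      (∀ i : Fin k, G.EdgeNB (f i.castSucc) (f i.succ)) →
      G.EdgeNB (f (Fin.last k)) (f 0) →
      ∃ C, G.IsCycle C ∧ ∀ v ∈ C, G.label v ≠ FLab.box := by
  intro k
  induction k using Nat.strong_induction_on with
  | _ k ih =>
  intro f hint hlast
  by_cases hinj : Function.Injective f
  · refine ⟨Set.range f, ⟨k, f, hinj, rfl, fun i => (hint i).1, hlast.1⟩, ?_⟩
    rintro v ⟨i, rfl⟩
    by_cases hi : i.val < k
    · have h2 := (hint ⟨i.val, hi⟩).2
      have h3 : Fin.castSucc (⟨i.val, hi⟩ : Fin k) = i := Fin.ext rfl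
      rwa [h3] at h2
    · have hi' : i = Fin.last k := Fin.ext (by simp only [Fin.val_last]; omega)
      rw [hi']; exact hlast.2
  · obtain ⟨i, j, hfe, hne⟩ := Function.not_injective_iff.mp hinj
    have key : ∀ i j : Fin (k + 1), i.val < j.val → f i = f j →
        ∃ C, G.IsCycle C ∧ ∀ v ∈ C, G.label v ≠ FLab.box := by
      clear hfe hne i j
      intro i j hij hfe
      have hjk : j.val ≤ k := by omega
      have hk1 : 1 ≤ j.val := by omega
      set k' := j.val - i.val - 1 with hk'
      have hk'' : k' < k := by omega
      refine ih k' hk'' (fun t => f ⟨i.val + t.val, by omega⟩) (fun t => ?_) ?_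
      · show G.EdgeNB (f ⟨i.val + t.val, by omega⟩) (f ⟨i.val + t.val + 1, by omega⟩)
        have ht : t.val < k' := t.2
        have h2 := hint ⟨i.val + t.val, by omega⟩
        have h3 : Fin.castSucc (⟨i.val + t.val, by omega⟩ : Fin k)
            = (⟨i.val + t.val, by omega⟩ : Fin (k + 1)) := Fin.ext rfl
        have h4 : Fin.succ (⟨i.val + t.val, by omega⟩ : Fin k)
            = (⟨i.val + t.val + 1, by omega⟩ : Fin (k + 1)) := Fin.ext rfl
        rwa [h3, h4] at h2
      · show G.EdgeNB (f ⟨i.val + k', by omega⟩) (f ⟨i.val + 0, by omega⟩)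
        have h2 := hint ⟨j.val - 1, by omega⟩
        have h3 : Fin.castSucc (⟨j.val - 1, by omega⟩ : Fin k)
            = (⟨i.val + k', by omega⟩ : Fin (k + 1)) := Fin.ext (by simp; omega)
        have h4 : Fin.succ (⟨j.val - 1, by omega⟩ : Fin k) = j := Fin.ext (by simp; omega)
        rw [h3, h4, ← hfe] at h2
        have h5 : f i = f (⟨i.val + 0, by omega⟩ : Fin (k + 1)) :=
          congrArg f (Fin.ext (by simp))
        rwa [h5] at h2
    rcases lt_trichotomy i.val j.val with h | h | h
    · exact key i j h hfe
    · exact absurd (Fin.ext h) hne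
    · exact key j i h hfe.symm

lemma wf_nb (G : Fm) (hg : G.Guarded) : WellFounded (fun b a => G.EdgeNB a b) := by
  haveI := G.fin
  have hirr : ∀ a, ¬ TransGen G.EdgeNB a a := by
    intro a ha
    obtain ⟨n, hn, f, hf0, hfl, hedge⟩ := transGen_walk ha
    have hintw : ∀ t : Fin (n - 1),
        G.EdgeNB (f ⟨t.val, by omega⟩) (f ⟨t.val + 1, by omega⟩) := by
      intro t
      have ht : t.val < n - 1 := t.2
      have h2 := hedge ⟨t.val, by omega⟩
      have h3 : Fin.castSucc (⟨t.val, by omega⟩ : Fin n)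
          = (⟨t.val, by omega⟩ : Fin (n + 1)) := Fin.ext rfl
      have h4 : Fin.succ (⟨t.val, by omega⟩ : Fin n)
          = (⟨t.val + 1, by omega⟩ : Fin (n + 1)) := Fin.ext rfl
      rwa [h3, h4] at h2
    have hlastw : G.EdgeNB (f ⟨n - 1, by omega⟩) (f ⟨0, by omega⟩) := by
      have h2 := hedge ⟨n - 1, by omega⟩
      have h3 : Fin.castSucc (⟨n - 1, by omega⟩ : Fin n)
          = (⟨n - 1, by omega⟩ : Fin (n + 1)) := Fin.ext rfl
      have h4 : Fin.succ (⟨n - 1, by omega⟩ : Fin n) = Fin.last n :=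
        Fin.ext (by simp only [Fin.val_succ, Fin.val_last]; omega)
      rw [h3, h4, hfl, ← hf0] at h2
      have h5 : (0 : Fin (n + 1)) = (⟨0, by omega⟩ : Fin (n + 1)) := rfl
      rwa [h5] at h2
    obtain ⟨C, hC, hnb⟩ := walk_cycle G (n - 1) (fun i => f ⟨i.val, by omega⟩) hintw hlastw
    obtain ⟨v, hvC, hvb⟩ := hg C hC
    exact hnb v hvC hvb
  have hwf : WellFounded (TransGen (fun b a => G.EdgeNB a b)) := by
    haveI : IsIrrefl G.V (TransGen (fun b a => G.EdgeNB a b)) :=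
      ⟨fun a h => hirr a (Relation.transGen_swap.mp h)⟩
    exact Finite.wellFounded_of_trans_of_irrefl _
  exact Subrelation.wf (r := TransGen fun b a => G.EdgeNB a b)
    (fun h => TransGen.single h) hwf


/-! #### `applyLab` lemmas -/

lemma applyLab_cast {l l' : FLab} (h : l' = l) (g : Fin l.ar → Fm) :
    Fm.applyLab l g = Fm.applyLab l' (fun i => g (Fin.cast (congrArg FLab.ar h) i)) := by
  subst h; rfl

lemma applyLab_box {l : FLab} (hl : l = FLab.box) (f : Fin l.ar → Fm) :
    Fm.applyLab l f = Fm.box (f ⟨0, by rw [hl]; exact Nat.one_pos⟩) := by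
  subst hl; rfl

/-! #### Propositional toolbox -/

/-- `A ↔ B` as a parse tree, matching `Fm.iff`. -/
def pIff (A B : PForm) : PForm := .and (.imp A B) (.imp B A)

section Logic

variable (Λ : Fm → Prop)
  (htaut : ∀ (A : PForm) (σ : ℕ → Fm), A.Taut → Λ (A.substFm σ))
  (hmp : ∀ φ ψ : Fm, Λ (Fm.imp φ ψ) → Λ φ → Λ ψ)

include htaut hmp

lemma limp_trans {X Y Z : Fm} (h1 : Λ (Fm.imp X Y)) (h2 : Λ (Fm.imp Y Z)) :
    Λ (Fm.imp X Z) := by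
  have t : Λ (Fm.imp (Fm.imp X Y) (Fm.imp (Fm.imp Y Z) (Fm.imp X Z))) :=
    htaut (.imp (.imp (.var 0) (.var 1)) (.imp (.imp (.var 1) (.var 2))
        (.imp (.var 0) (.var 2))))
      (fun n => match n with | 0 => X | 1 => Y | _ => Z)
      (by intro v; simp only [PForm.eval]
          cases hv0 : v 0 <;> cases hv1 : v 1 <;> cases hv2 : v 2 <;> simp [hv0, hv1, hv2])
  exact hmp _ _ (hmp _ _ t h1) h2

lemma liff_of_imp {H X Y : Fm} (h1 : Λ (Fm.imp H (Fm.imp X Y)))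
    (h2 : Λ (Fm.imp H (Fm.imp Y X))) : Λ (Fm.imp H (Fm.iff X Y)) := by
  have t : Λ (Fm.imp (Fm.imp H (Fm.imp X Y)) (Fm.imp (Fm.imp H (Fm.imp Y X))
      (Fm.imp H (Fm.iff X Y)))) :=
    htaut (.imp (.imp (.var 0) (.imp (.var 1) (.var 2)))
        (.imp (.imp (.var 0) (.imp (.var 2) (.var 1)))
          (.imp (.var 0) (pIff (.var 1) (.var 2)))))
      (fun n => match n with | 0 => H | 1 => X | _ => Y)
      (by intro v; simp only [pIff, PForm.eval]
          cases hv0 : v 0 <;> cases hv1 : v 1 <;> cases hv2 : v 2 <;> simp [hv0, hv1, hv2])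
  exact hmp _ _ (hmp _ _ t h1) h2

lemma liff_mp1 {H X Y : Fm} (h : Λ (Fm.imp H (Fm.iff X Y))) :
    Λ (Fm.imp H (Fm.imp X Y)) := by
  have t : Λ (Fm.imp (Fm.imp H (Fm.iff X Y)) (Fm.imp H (Fm.imp X Y))) :=
    htaut (.imp (.imp (.var 0) (pIff (.var 1) (.var 2)))
        (.imp (.var 0) (.imp (.var 1) (.var 2))))
      (fun n => match n with | 0 => H | 1 => X | _ => Y)
      (by intro v; simp only [pIff, PForm.eval]
          cases hv0 : v 0 <;> cases hv1 : v 1 <;> cases hv2 : v 2 <;> simp [hv0, hv1, hv2])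
  exact hmp _ _ t h

lemma liff_mp2 {H X Y : Fm} (h : Λ (Fm.imp H (Fm.iff X Y))) :
    Λ (Fm.imp H (Fm.imp Y X)) := by
  have t : Λ (Fm.imp (Fm.imp H (Fm.iff X Y)) (Fm.imp H (Fm.imp Y X))) :=
    htaut (.imp (.imp (.var 0) (pIff (.var 1) (.var 2)))
        (.imp (.var 0) (.imp (.var 2) (.var 1))))
      (fun n => match n with | 0 => H | 1 => X | _ => Y)
      (by intro v; simp only [pIff, PForm.eval]
          cases hv0 : v 0 <;> cases hv1 : v 1 <;> cases hv2 : v 2 <;> simp [hv0, hv1, hv2])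
  exact hmp _ _ t h

lemma lcombine {P X Q Y H : Fm} (h1 : Λ (Fm.iff P X)) (h2 : Λ (Fm.iff Q Y))
    (h3 : Λ (Fm.imp H (Fm.iff X Y))) : Λ (Fm.imp H (Fm.iff P Q)) := by
  have t : Λ (Fm.imp (Fm.iff P X) (Fm.imp (Fm.iff Q Y)
      (Fm.imp (Fm.imp H (Fm.iff X Y)) (Fm.imp H (Fm.iff P Q))))) :=
    htaut (.imp (pIff (.var 0) (.var 1)) (.imp (pIff (.var 2) (.var 3))
        (.imp (.imp (.var 4) (pIff (.var 1) (.var 3)))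
          (.imp (.var 4) (pIff (.var 0) (.var 2))))))
      (fun n => match n with | 0 => P | 1 => X | 2 => Q | 3 => Y | _ => H)
      (by intro v; simp only [pIff, PForm.eval]
          cases hv0 : v 0 <;> cases hv1 : v 1 <;> cases hv2 : v 2 <;> cases hv3 : v 3 <;>
            cases hv4 : v 4 <;> simp [hv0, hv1, hv2, hv3, hv4])
  exact hmp _ _ (hmp _ _ (hmp _ _ t h1) h2) h3

lemma lc0 {H : Fm} (X : Fm) : Λ (Fm.imp H (Fm.iff X X)) :=
  htaut (.imp (.var 0) (pIff (.var 1) (.var 1)))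
    (fun n => match n with | 0 => H | _ => X)
    (by intro v; simp only [pIff, PForm.eval]
        cases hv0 : v 0 <;> cases hv1 : v 1 <;> simp [hv0, hv1])

lemma lcneg {H X Y : Fm} (h : Λ (Fm.imp H (Fm.iff X Y))) :
    Λ (Fm.imp H (Fm.iff (Fm.neg X) (Fm.neg Y))) := by
  have t : Λ (Fm.imp (Fm.imp H (Fm.iff X Y))
      (Fm.imp H (Fm.iff (Fm.neg X) (Fm.neg Y)))) :=
    htaut (.imp (.imp (.var 0) (pIff (.var 1) (.var 2)))
        (.imp (.var 0) (pIff (.neg (.var 1)) (.neg (.var 2)))))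
      (fun n => match n with | 0 => H | 1 => X | _ => Y)
      (by intro v; simp only [pIff, PForm.eval]
          cases hv0 : v 0 <;> cases hv1 : v 1 <;> cases hv2 : v 2 <;> simp [hv0, hv1, hv2])
  exact hmp _ _ t h

lemma lcand {H X Y X' Y' : Fm} (h1 : Λ (Fm.imp H (Fm.iff X X')))
    (h2 : Λ (Fm.imp H (Fm.iff Y Y'))) :
    Λ (Fm.imp H (Fm.iff (Fm.and X Y) (Fm.and X' Y'))) := by
  have t : Λ (Fm.imp (Fm.imp H (Fm.iff X X')) (Fm.imp (Fm.imp H (Fm.iff Y Y'))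
      (Fm.imp H (Fm.iff (Fm.and X Y) (Fm.and X' Y'))))) :=
    htaut (.imp (.imp (.var 0) (pIff (.var 1) (.var 2)))
        (.imp (.imp (.var 0) (pIff (.var 3) (.var 4)))
          (.imp (.var 0) (pIff (.and (.var 1) (.var 3)) (.and (.var 2) (.var 4))))))
      (fun n => match n with | 0 => H | 1 => X | 2 => X' | 3 => Y | _ => Y')
      (by intro v; simp only [pIff, PForm.eval]
          cases hv0 : v 0 <;> cases hv1 : v 1 <;> cases hv2 : v 2 <;> cases hv3 : v 3 <;>
            cases hv4 : v 4 <;> simp [hv0, hv1, hv2, hv3, hv4])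
  exact hmp _ _ (hmp _ _ t h1) h2

lemma lcor {H X Y X' Y' : Fm} (h1 : Λ (Fm.imp H (Fm.iff X X')))
    (h2 : Λ (Fm.imp H (Fm.iff Y Y'))) :
    Λ (Fm.imp H (Fm.iff (Fm.or X Y) (Fm.or X' Y'))) := by
  have t : Λ (Fm.imp (Fm.imp H (Fm.iff X X')) (Fm.imp (Fm.imp H (Fm.iff Y Y'))
      (Fm.imp H (Fm.iff (Fm.or X Y) (Fm.or X' Y'))))) :=
    htaut (.imp (.imp (.var 0) (pIff (.var 1) (.var 2)))
        (.imp (.imp (.var 0) (pIff (.var 3) (.var 4)))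
          (.imp (.var 0) (pIff (.or (.var 1) (.var 3)) (.or (.var 2) (.var 4))))))
      (fun n => match n with | 0 => H | 1 => X | 2 => X' | 3 => Y | _ => Y')
      (by intro v; simp only [pIff, PForm.eval]
          cases hv0 : v 0 <;> cases hv1 : v 1 <;> cases hv2 : v 2 <;> cases hv3 : v 3 <;>
            cases hv4 : v 4 <;> simp [hv0, hv1, hv2, hv3, hv4])
  exact hmp _ _ (hmp _ _ t h1) h2

lemma lcimp {H X Y X' Y' : Fm} (h1 : Λ (Fm.imp H (Fm.iff X X')))
    (h2 : Λ (Fm.imp H (Fm.iff Y Y'))) :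
    Λ (Fm.imp H (Fm.iff (Fm.imp X Y) (Fm.imp X' Y'))) := by
  have t : Λ (Fm.imp (Fm.imp H (Fm.iff X X')) (Fm.imp (Fm.imp H (Fm.iff Y Y'))
      (Fm.imp H (Fm.iff (Fm.imp X Y) (Fm.imp X' Y'))))) :=
    htaut (.imp (.imp (.var 0) (pIff (.var 1) (.var 2)))
        (.imp (.imp (.var 0) (pIff (.var 3) (.var 4)))
          (.imp (.var 0) (pIff (.imp (.var 1) (.var 3)) (.imp (.var 2) (.var 4))))))
      (fun n => match n with | 0 => H | 1 => X | 2 => X' | 3 => Y | _ => Y')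
      (by intro v; simp only [pIff, PForm.eval]
          cases hv0 : v 0 <;> cases hv1 : v 1 <;> cases hv2 : v 2 <;> cases hv3 : v 3 <;>
            cases hv4 : v 4 <;> simp [hv0, hv1, hv2, hv3, hv4])
  exact hmp _ _ (hmp _ _ t h1) h2

lemma lproj1 (X Y : Fm) : Λ (Fm.imp (Fm.and X Y) X) :=
  htaut (.imp (.and (.var 0) (.var 1)) (.var 0))
    (fun n => match n with | 0 => X | _ => Y)
    (by intro v; simp only [PForm.eval]
        cases hv0 : v 0 <;> cases hv1 : v 1 <;> simp [hv0, hv1])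

lemma lproj2 (X Y : Fm) : Λ (Fm.imp (Fm.and X Y) Y) :=
  htaut (.imp (.and (.var 0) (.var 1)) (.var 1))
    (fun n => match n with | 0 => X | _ => Y)
    (by intro v; simp only [PForm.eval]
        cases hv0 : v 0 <;> cases hv1 : v 1 <;> simp [hv0, hv1])

lemma lbigAnd_proj {ψ : Fm} : ∀ {l : List Fm}, ψ ∈ l → Λ (Fm.imp (Fm.bigAnd l) ψ) := by
  intro l hl
  induction l with
  | nil => cases hl
  | cons χ t ih =>
    rcases List.mem_cons.mp hl with rfl | h
    · exact lproj1 Λ htaut hmp ψ (Fm.bigAnd t)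
    · exact limp_trans Λ htaut hmp (lproj2 Λ htaut hmp χ (Fm.bigAnd t)) (ih h)

lemma limp_top (H : Fm) : Λ (Fm.imp H Fm.topFm) :=
  htaut (.imp (.var 0) .top) (fun _ => H)
    (by intro v; simp only [PForm.eval]; cases hv0 : v 0 <;> simp [hv0])

lemma limp_and {H X Y : Fm} (h1 : Λ (Fm.imp H X)) (h2 : Λ (Fm.imp H Y)) :
    Λ (Fm.imp H (Fm.and X Y)) := by
  have t : Λ (Fm.imp (Fm.imp H X) (Fm.imp (Fm.imp H Y) (Fm.imp H (Fm.and X Y)))) :=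
    htaut (.imp (.imp (.var 0) (.var 1)) (.imp (.imp (.var 0) (.var 2))
        (.imp (.var 0) (.and (.var 1) (.var 2)))))
      (fun n => match n with | 0 => H | 1 => X | _ => Y)
      (by intro v; simp only [PForm.eval]
          cases hv0 : v 0 <;> cases hv1 : v 1 <;> cases hv2 : v 2 <;> simp [hv0, hv1, hv2])
  exact hmp _ _ (hmp _ _ t h1) h2

lemma limp_bigAnd {H : Fm} : ∀ {l : List Fm}, (∀ ψ ∈ l, Λ (Fm.imp H ψ)) →
    Λ (Fm.imp H (Fm.bigAnd l)) := by
  intro l hl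
  induction l with
  | nil => exact limp_top Λ htaut hmp H
  | cons χ t ih =>
    exact limp_and Λ htaut hmp (hl χ List.mem_cons_self)
      (ih fun ψ h => hl ψ (List.mem_cons_of_mem χ h))

lemma applyLab_cong {H : Fm} {l : FLab} (hl : l ≠ FLab.box)
    (f g : Fin l.ar → Fm) (hfg : ∀ i, Λ (Fm.imp H (Fm.iff (f i) (g i)))) :
    Λ (Fm.imp H (Fm.iff (Fm.applyLab l f) (Fm.applyLab l g))) := by
  cases l with
  | top => exact lc0 Λ htaut hmp Fm.topFm
  | bot => exact lc0 Λ htaut hmp Fm.botFm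
  | var n => exact lc0 Λ htaut hmp (Fm.varFm n)
  | box => exact absurd rfl hl
  | neg => exact lcneg Λ htaut hmp (hfg 0)
  | and => exact lcand Λ htaut hmp (hfg 0) (hfg 1)
  | or => exact lcor Λ htaut hmp (hfg 0) (hfg 1)
  | imp => exact lcimp Λ htaut hmp (hfg 0) (hfg 1)

variable (hk : ∀ φ ψ : Fm, Λ (Fm.imp (Fm.box (Fm.imp φ ψ)) (Fm.imp (Fm.box φ) (Fm.box ψ))))
  (hnec : ∀ φ : Fm, Λ φ → Λ (Fm.box φ))

include hk hnec

lemma lbox_mono {E X : Fm} (h : Λ (Fm.imp E X)) : Λ (Fm.imp (Fm.box E) (Fm.box X)) :=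
  hmp _ _ (hk E X) (hnec _ h)

end Logic

end UT

/-- **Uniqueness of local translations modulo bisimulation** (Theorem
`unitrans`): let `Λ` be a logic containing all propositional tautologies
and the distribution axioms, closed under modus ponens, necessitation
and Löb's Rule.  If `𝒯`, `𝒯'` are local translations of `φ`, `φ'` into
`Λ` and `R` is a bisimulation between `φ` and `φ'` (not necessarily
root-preserving), then `a R a'` implies `Λ ⊢ 𝒯(a) ↔ 𝒯'(a')`. -/
theorem local_translation_unique (Λ : Fm → Prop)
    (htaut : ∀ (A : PForm) (σ : ℕ → Fm), A.Taut → Λ (A.substFm σ))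
    (hk : ∀ φ ψ : Fm, Λ (Fm.imp (Fm.box (Fm.imp φ ψ)) (Fm.imp (Fm.box φ) (Fm.box ψ))))
    (hmp : ∀ φ ψ : Fm, Λ (Fm.imp φ ψ) → Λ φ → Λ ψ)
    (hnec : ∀ φ : Fm, Λ φ → Λ (Fm.box φ))
    (hlob : ∀ φ : Fm, Λ (Fm.imp (Fm.box φ) φ) → Λ φ)
    (φ φ' : Fm) (hφ : φ.WF) (hφ' : φ'.WF)
    (T : φ.V → Fm) (T' : φ'.V → Fm)
    (hT : IsLocalTranslation Λ φ T) (hT' : IsLocalTranslation Λ φ' T')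
    (R : φ.V → φ'.V → Prop) (hR : RGraph.IsBisim φ φ' R) :
    ∀ a a', R a a' → Λ (Fm.iff (T a) (T' a')) := by
  classical
  haveI := φ.fin
  haveI := φ'.fin
  haveI : Fintype φ.V := Fintype.ofFinite _
  haveI : Fintype φ'.V := Fintype.ofFinite _
  set P : Finset (φ.V × φ'.V) := Finset.univ.filter (fun p => R p.1 p.2) with hP
  set L : List Fm := P.toList.map (fun p => Fm.iff (T p.1) (T' p.2)) with hL
  set E : Fm := Fm.bigAnd L with hE
  have hmem : ∀ a a', R a a' → Fm.iff (T a) (T' a') ∈ L := by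
    intro a a' h
    rw [hL]
    have h1 : (a, a') ∈ P := by
      rw [hP, Finset.mem_filter]
      exact ⟨Finset.mem_univ _, h⟩
    exact List.mem_map_of_mem (Finset.mem_toList.mpr h1)
  have hwf := UT.wf_nb φ hφ.2
  have main : ∀ a : φ.V, ∀ a', R a a' →
      Λ (Fm.imp (Fm.box E) (Fm.iff (T a) (T' a'))) := by
    intro a
    refine hwf.induction (C := fun x => ∀ a', R x a' →
      Λ (Fm.imp (Fm.box E) (Fm.iff (T x) (T' a')))) a ?_
    intro x ih a' hx
    obtain ⟨hlab, hs⟩ := hR x a' hx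
    have hTx := hT x
    have hT'a := hT' a'
    rw [UT.applyLab_cast hlab (fun i => T' (φ'.succ a' i))] at hT'a
    by_cases hbox : φ.label x = FLab.box
    · rw [UT.applyLab_box hbox] at hTx hT'a
      set i0 : Fin (FLab.ar (φ.label x)) := ⟨0, by rw [hbox]; exact Nat.one_pos⟩ with hi0
      have hRb := hs i0
      have hconj := UT.lbigAnd_proj Λ htaut hmp (hmem _ _ hRb)
      rw [← hE] at hconj
      have h1 := UT.liff_mp1 Λ htaut hmp hconj
      have h2 := UT.liff_mp2 Λ htaut hmp hconj
      have h3 := UT.lbox_mono Λ htaut hmp hk hnec h1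
      have h4 := UT.lbox_mono Λ htaut hmp hk hnec h2
      have h5 := UT.limp_trans Λ htaut hmp h3 (hk _ _)
      have h6 := UT.limp_trans Λ htaut hmp h4 (hk _ _)
      have h7 := UT.liff_of_imp Λ htaut hmp h5 h6
      exact UT.lcombine Λ htaut hmp hTx hT'a h7
    · refine UT.lcombine Λ htaut hmp hTx hT'a ?_
      exact UT.applyLab_cong Λ htaut hmp hbox _ _
        (fun i => ih _ ⟨⟨i, rfl⟩, hbox⟩ _ (hs i))
  have hE1 : ∀ ψ ∈ L, Λ (Fm.imp (Fm.box E) ψ) := by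
    intro ψ hψ
    rw [hL] at hψ
    obtain ⟨p, hp, rfl⟩ := List.mem_map.mp hψ
    have hpR : R p.1 p.2 := (Finset.mem_filter.mp (Finset.mem_toList.mp hp)).2
    exact main p.1 p.2 hpR
  have hboxE : Λ (Fm.imp (Fm.box E) E) := by
    rw [hE]
    exact UT.limp_bigAnd Λ htaut hmp (by rw [← hE]; exact hE1)
  have hEthm : Λ E := hlob E hboxE
  intro a a' hraa
  exact hmp _ _ (UT.lbigAnd_proj Λ htaut hmp (hmem a a' hraa)) hEthm
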